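/- Let H₃ = ⟨e, f, g | [e,f] = 1, [f,g] = 1, [e,g] = f⟩ be the discrete Heisenberg group, H a real Hilbert space, and α : H₃ → H satisfy |α(γγ₁) - α(γγ₂)| = |α(γ₁) - α(γ₂)| for all γ, γ₁, γ₂ ∈ H₃. If there is a vector d ∈ H with α(γf) = α(γ) + d for all γ ∈ H₃ (f acts as a translation by d in the arrangement), then d = 0, i.e. α(γf) = α(γ) for all γ. -/

import Mathlib

/-!
Write `ℓ x = ‖α x - α 1‖`. Left invariance of the distances makes `ℓ` subadditive, so the
commutator `f^(n*n) = [e^n, g^n]` has `ℓ`-length at most linear in `n`. On the other hand `f` acts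
as translation by `d`, so `ℓ (f^(n*n)) = n^2 ‖d‖`, which forces `d = 0`.
-/

section Commutator

variable {G : Type*} [Group G] {e f g : G}

theorem inv_mul_pow_mul_eq_pow_mul_pow (hef : Commute e f) (heg : e⁻¹ * g⁻¹ * e * g = f)
    (m : ℕ) : g⁻¹ * e ^ m * g = e ^ m * f ^ m := by
  have hconj : g⁻¹ * e * g = e * f := by rw [← heg]; group
  simpa [hconj, hef.mul_pow] using (conj_pow (a := g⁻¹) (b := e) (i := m)).symm

theorem inv_pow_mul_pow_mul_pow_eq (hef : Commute e f) (hfg : Commute f g)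
    (heg : e⁻¹ * g⁻¹ * e * g = f) (m n : ℕ) :
    (g ^ n)⁻¹ * e ^ m * g ^ n = e ^ m * f ^ (m * n) := by
  induction n with
  | zero => simp
  | succ n ih =>
    calc (g ^ (n + 1))⁻¹ * e ^ m * g ^ (n + 1)
        = g⁻¹ * ((g ^ n)⁻¹ * e ^ m * g ^ n) * g := by group
      _ = (g⁻¹ * e ^ m * g) * (g⁻¹ * f ^ (m * n) * g) := by rw [ih]; group
      _ = e ^ m * f ^ m * f ^ (m * n) := by
        rw [inv_mul_pow_mul_eq_pow_mul_pow hef heg, mul_assoc g⁻¹, (hfg.pow_left _).eq,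
          inv_mul_cancel_left]
      _ = e ^ m * f ^ (m * (n + 1)) := by rw [mul_assoc, ← pow_add, mul_add_one, add_comm]

theorem pow_commutator_pow_eq (hef : Commute e f) (hfg : Commute f g)
    (heg : e⁻¹ * g⁻¹ * e * g = f) (m n : ℕ) :
    (e ^ m)⁻¹ * (g ^ n)⁻¹ * e ^ m * g ^ n = f ^ (m * n) := by
  rw [mul_assoc (e ^ m)⁻¹, mul_assoc (e ^ m)⁻¹, inv_pow_mul_pow_mul_pow_eq hef hfg heg,
    inv_mul_cancel_left]

end Commutator

section LeftInvariant

variable {G E : Type*} [Group G] [SeminormedAddCommGroup E] {α : G → E}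

theorem norm_apply_mul_sub_apply_one_le
    (hα : ∀ γ γ₁ γ₂ : G, ‖α (γ * γ₁) - α (γ * γ₂)‖ = ‖α γ₁ - α γ₂‖) (x y : G) :
    ‖α (x * y) - α 1‖ ≤ ‖α x - α 1‖ + ‖α y - α 1‖ := by
  have hstep : ‖α (x * y) - α x‖ = ‖α y - α 1‖ := by simpa using hα x y 1
  calc ‖α (x * y) - α 1‖ ≤ ‖α (x * y) - α x‖ + ‖α x - α 1‖ :=
        norm_sub_le_norm_sub_add_norm_sub _ _ _
    _ = ‖α x - α 1‖ + ‖α y - α 1‖ := by rw [hstep, add_comm]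

theorem norm_apply_pow_sub_apply_one_le
    (hα : ∀ γ γ₁ γ₂ : G, ‖α (γ * γ₁) - α (γ * γ₂)‖ = ‖α γ₁ - α γ₂‖) (x : G) (n : ℕ) :
    ‖α (x ^ n) - α 1‖ ≤ n * ‖α x - α 1‖ := by
  induction n with
  | zero => simp
  | succ n ih =>
    calc ‖α (x ^ (n + 1)) - α 1‖ ≤ ‖α (x ^ n) - α 1‖ + ‖α x - α 1‖ := by
          rw [pow_succ]; exact norm_apply_mul_sub_apply_one_le hα _ _
      _ ≤ (n + 1 : ℕ) * ‖α x - α 1‖ := by push_cast; linarith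

theorem norm_apply_commutator_pow_sub_apply_one_le
    (hα : ∀ γ γ₁ γ₂ : G, ‖α (γ * γ₁) - α (γ * γ₂)‖ = ‖α γ₁ - α γ₂‖) (e g : G) (n : ℕ) :
    ‖α ((e ^ n)⁻¹ * (g ^ n)⁻¹ * e ^ n * g ^ n) - α 1‖ ≤
      n * (‖α e⁻¹ - α 1‖ + ‖α g⁻¹ - α 1‖ + ‖α e - α 1‖ + ‖α g - α 1‖) := by
  have hmul := norm_apply_mul_sub_apply_one_le hα
  have hpow := norm_apply_pow_sub_apply_one_le hα
  rw [← inv_pow, ← inv_pow]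
  linarith [hmul (e⁻¹ ^ n * g⁻¹ ^ n * e ^ n) (g ^ n), hmul (e⁻¹ ^ n * g⁻¹ ^ n) (e ^ n),
    hmul (e⁻¹ ^ n) (g⁻¹ ^ n), hpow e⁻¹ n, hpow g⁻¹ n, hpow e n, hpow g n]

end LeftInvariant

theorem apply_mul_pow_eq_add_nsmul {G E : Type*} [Monoid G] [AddMonoid E] {α : G → E} {f : G}
    {d : E} (hd : ∀ γ, α (γ * f) = α γ + d) (γ : G) (k : ℕ) : α (γ * f ^ k) = α γ + k • d := by
  induction k with
  | zero => simp
  | succ k ih => rw [pow_succ, ← mul_assoc, hd, ih, succ_nsmul, add_assoc]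

theorem nonpos_of_forall_nat_mul_self_mul_le {a C : ℝ} (h : ∀ n : ℕ, (n * n : ℝ) * a ≤ n * C) :
    a ≤ 0 := by
  by_contra! ha
  obtain ⟨n, hn⟩ := exists_nat_gt (max (C / a) 0)
  have hn₀ : (0 : ℝ) < n := (le_max_right _ _).trans_lt hn
  have hCn : C < n * a := (div_lt_iff₀ ha).mp ((le_max_left _ _).trans_lt hn)
  nlinarith [h n]

theorem stmt9_general {Γ : Type*} [Group Γ] {H : Type*}
    [NormedAddCommGroup H] [InnerProductSpace ℝ H]
    (e f g : Γ)
    (hef : e * f = f * e) (hfg : f * g = g * f)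
    (heg : e⁻¹ * g⁻¹ * e * g = f)
    (α : Γ → H)
    (hinv : ∀ γ γ₁ γ₂ : Γ, ‖α (γ * γ₁) - α (γ * γ₂)‖ = ‖α γ₁ - α γ₂‖)
    (d : H) (hd : ∀ γ : Γ, α (γ * f) = α γ + d) :
    d = 0 ∧ ∀ γ : Γ, α (γ * f) = α γ := by
  have hd₀ : d = 0 := by
    apply norm_le_zero_iff.mp
    apply nonpos_of_forall_nat_mul_self_mul_le
    intro n
    have hbound := norm_apply_commutator_pow_sub_apply_one_le hinv e g n
    have htrans := apply_mul_pow_eq_add_nsmul hd 1 (n * n)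
    rw [one_mul] at htrans
    rwa [pow_commutator_pow_eq hef hfg heg, htrans, add_sub_cancel_left, RCLike.norm_nsmul ℝ,
      nsmul_eq_mul, Nat.cast_mul] at hbound
  exact ⟨hd₀, fun γ => by rw [hd γ, hd₀, add_zero]⟩

/-- The discrete Heisenberg group, presented abstractly: a group generated by
`e, g` with `f = [e,g]` central. -/
theorem stmt9 {Γ : Type*} [Group Γ] {H : Type*}
    [NormedAddCommGroup H] [InnerProductSpace ℝ H] [CompleteSpace H]
    (e f g : Γ)
    (hef : e * f = f * e) (hfg : f * g = g * f)
    (heg : e⁻¹ * g⁻¹ * e * g = f)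
    (hgen : Subgroup.closure ({e, f, g} : Set Γ) = ⊤)
    (α : Γ → H)
    (hinv : ∀ γ γ₁ γ₂ : Γ, ‖α (γ * γ₁) - α (γ * γ₂)‖ = ‖α γ₁ - α γ₂‖)
    (d : H) (hd : ∀ γ : Γ, α (γ * f) = α γ + d) :
    d = 0 ∧ ∀ γ : Γ, α (γ * f) = α γ :=
  stmt9_general e f g hef hfg heg α hinv d hd
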